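/- For m=2, the coefficients C_n(q) of the series C_q(u) = E(-qu)/E(-u) satisfy C_n(q) = Σ_{k=0}^{n-1} q^k C_k(q) C_{n-1-k}(q) for n ≥ 1, with C_0(q)=1. -/

import Mathlib

/-- The q-Pochhammer symbol `(a;q)_n`. -/
noncomputable def qPoch (a q : ℝ) (n : ℕ) : ℝ := ∏ j ∈ Finset.range n, (1 - q ^ j * a)

/-!
Write `F(u) = E(-u)`, so that `C(u) = F(qu) / F(u)`. Comparing coefficients shows the
`q`-difference equation `F(qu) = F(u) + u F(q²u)`. Since `C(qu) = F(q²u) / F(qu)`, dividing it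
by `F(u)` gives `C(u) = 1 + u C(qu) C(u)`, whose coefficients are the stated convolution.
-/

open PowerSeries

lemma qPoch_succ (a q : ℝ) (n : ℕ) : qPoch a q (n + 1) = qPoch a q n * (1 - q ^ n * a) :=
  Finset.prod_range_succ _ n

lemma qPoch_self_ne_zero {q : ℝ} (hq : |q| < 1) (n : ℕ) : qPoch q q n ≠ 0 := by
  refine Finset.prod_ne_zero_iff.mpr fun j _ => sub_ne_zero.mpr fun h => ?_
  have : |q ^ j * q| < 1 := by
    rw [← pow_succ, abs_pow]
    exact pow_lt_one₀ (abs_nonneg q) hq j.succ_ne_zero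
  rw [← h, abs_one] at this
  exact lt_irrefl 1 this

lemma mul_one_sub_pow_succ_div_qPoch {q : ℝ} (hq : |q| < 1) (n : ℕ) :
    q ^ ((n + 1) * (n + 1 - 1)) / qPoch q q (n + 1) * (1 - q ^ (n + 1)) =
      q ^ (2 * n) * (q ^ (n * (n - 1)) / qPoch q q n) := by
  have hexp : (n + 1) * (n + 1 - 1) = n * (n - 1) + 2 * n := by
    rcases n with _ | n
    · rfl
    · simp only [Nat.add_sub_cancel]; ring
  have hfactor : (1 : ℝ) - q ^ n * q ≠ 0 := by
    have := qPoch_self_ne_zero hq (n + 1)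
    rw [qPoch_succ] at this
    exact right_ne_zero_of_mul this
  have := qPoch_self_ne_zero hq n
  rw [hexp, qPoch_succ, pow_succ]
  field_simp
  ring

lemma rescale_eq_add_X_mul_rescale_sq {R : Type*} [CommRing R] (q : R) (a : ℕ → R)
    (ha : ∀ n, a (n + 1) * (1 - q ^ (n + 1)) = q ^ (2 * n) * a n) :
    rescale q (rescale (-1) (mk a)) =
      rescale (-1) (mk a) + X * rescale (q ^ 2) (rescale (-1) (mk a)) := by
  ext (_ | n)
  · simp only [map_add, coeff_zero_X_mul, coeff_rescale]
    ring
  · simp only [map_add, coeff_succ_X_mul, coeff_rescale, coeff_mk]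
    linear_combination (-1) ^ n * ha n

lemma eq_one_add_X_mul_rescale_mul_of_mul_eq_rescale {R : Type*} [CommRing R] [IsDomain R]
    {q : R} {F C : R⟦X⟧} (hF0 : F ≠ 0) (hF : rescale q F = F + X * rescale (q ^ 2) F)
    (hC : C * F = rescale q F) :
    C = 1 + X * (rescale q C * C) := by
  have hCq : rescale q C * rescale q F = rescale (q ^ 2) F := by
    rw [← map_mul, hC, rescale_rescale, sq]
  refine mul_right_cancel₀ hF0 ?_
  calc C * F = F + X * rescale (q ^ 2) F := hC.trans hF
    _ = (1 + X * (rescale q C * C)) * F := by rw [← hCq, ← hC]; ring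

lemma coeff_succ_eq_sum_of_eq_one_add_X_mul {R : Type*} [CommSemiring R] {q : R} {C : R⟦X⟧}
    (hC : C = 1 + X * (rescale q C * C)) (n : ℕ) :
    coeff (n + 1) C = ∑ k ∈ Finset.range (n + 1), q ^ k * coeff k C * coeff (n - k) C := by
  conv_lhs => rw [hC]
  rw [map_add, coeff_one, if_neg n.succ_ne_zero, zero_add, coeff_succ_X_mul, coeff_mul,
    Finset.Nat.sum_antidiagonal_eq_sum_range_succ (fun i j => coeff i (rescale q C) * coeff j C)]
  simp only [coeff_rescale]

lemma coeff_zero_of_eq_one_add_X_mul {R : Type*} [CommSemiring R] {q : R} {C : R⟦X⟧}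
    (hC : C = 1 + X * (rescale q C * C)) : coeff 0 C = 1 := by
  rw [hC, map_add, coeff_zero_X_mul, add_zero, coeff_zero_one]

theorem q_catalan_convolution (q : ℝ) (hq0 : 0 < q) (hq1 : q < 1)
    (E C : PowerSeries ℝ)
    (hE : E = PowerSeries.mk fun n => q ^ (n * (n - 1)) / qPoch q q n)
    (hC : C = PowerSeries.rescale (-q) E * (PowerSeries.rescale (-1) E)⁻¹) :
    PowerSeries.coeff 0 C = 1 ∧
      ∀ n, 1 ≤ n →
        PowerSeries.coeff n C =
          ∑ k ∈ Finset.range n,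
            q ^ k * PowerSeries.coeff k C * PowerSeries.coeff (n - 1 - k) C := by
  have hq : |q| < 1 := abs_lt.mpr ⟨by linarith, hq1⟩
  subst hE
  set F := rescale (-1) (mk fun n => q ^ (n * (n - 1)) / qPoch q q n)
  have hF : rescale q F = F + X * rescale (q ^ 2) F :=
    rescale_eq_add_X_mul_rescale_sq q _ (mul_one_sub_pow_succ_div_qPoch hq)
  have hF0 : constantCoeff F ≠ 0 := by
    rw [← coeff_zero_eq_constantCoeff_apply, coeff_rescale]
    simp [qPoch]
  have hCF : C * F = rescale q F := by
    rw [hC, ← eq_mul_inv_iff_mul_eq hF0, rescale_rescale, neg_one_mul]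
  have hCq := eq_one_add_X_mul_rescale_mul_of_mul_eq_rescale
    (fun h => hF0 (by rw [h, map_zero])) hF hCF
  refine ⟨coeff_zero_of_eq_one_add_X_mul hCq, fun n hn => ?_⟩
  obtain ⟨m, rfl⟩ := Nat.exists_eq_add_of_le' hn
  simpa only [Nat.add_sub_cancel] using coeff_succ_eq_sum_of_eq_one_add_X_mul hCq m
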